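/- For all natural numbers p, q, n, the sum over k from 0 to n of C(p+n, k)·C(q+n, n-k)·H_{q+k} equals C(p+q+2n, n)·(H_{q+n} + H_{p+q+n} - H_{p+q+2n}). -/

import Mathlib

/-!
Write the upper index `p + n` of the first binomial as a free parameter `a`. Pascal's rule in `a`
gives `F (a + 1) q (n + 1) = F a q (n + 1) + F a (q + 1) n` for the left-hand side `F`, the
closed form satisfies the same recurrence (this reduces to
`C(N, n + 1) (n + 1) = C(N, n) (N - n)`), and both sides agree at `n = 0` and at `a = 0`,
where only the term `k = 0` survives. Induction on `a` concludes.
-/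

open Finset BigOperators

def H (n : ℕ) : ℚ := ∑ i ∈ Finset.range n, 1 / (i + 1 : ℚ)

def H2 (n : ℕ) : ℚ := ∑ i ∈ Finset.range n, 1 / ((i + 1 : ℚ))^2

lemma H_succ (n : ℕ) : H (n + 1) = H n + 1 / (n + 1) := by
  simp [H, Finset.sum_range_succ]

lemma sum_range_choose_succ_mul {R : Type*} [Semiring R] (a n : ℕ) (f : ℕ → R) :
    ∑ k ∈ range (n + 2), ((a + 1).choose k : R) * f k
      = ∑ k ∈ range (n + 2), (a.choose k : R) * f k
        + ∑ k ∈ range (n + 1), (a.choose k : R) * f (k + 1) := by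
  rw [sum_range_succ' _ (n + 1), sum_range_succ' (fun k => (a.choose k : R) * f k) (n + 1)]
  simp only [Nat.choose_succ_succ', Nat.cast_add, add_mul, sum_add_distrib, Nat.choose_zero_right]
  abel

def harmonicVandermonde (a q n : ℕ) : ℚ :=
  ∑ k ∈ range (n + 1), (a.choose k : ℚ) * ((q + n).choose (n - k) : ℚ) * H (q + k)

def harmonicVandermondeClosed (a q n : ℕ) : ℚ :=
  ((a + q + n).choose n : ℚ) * (H (q + n) + H (a + q) - H (a + q + n))

lemma harmonicVandermonde_zero_left (q n : ℕ) :
    harmonicVandermonde 0 q n = harmonicVandermondeClosed 0 q n := by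
  simp [harmonicVandermonde, harmonicVandermondeClosed, sum_range_succ']

lemma harmonicVandermonde_zero_right (a q : ℕ) :
    harmonicVandermonde a q 0 = harmonicVandermondeClosed a q 0 := by
  simp [harmonicVandermonde, harmonicVandermondeClosed]

lemma harmonicVandermonde_succ_succ (a q n : ℕ) :
    harmonicVandermonde (a + 1) q (n + 1)
      = harmonicVandermonde a q (n + 1) + harmonicVandermonde a (q + 1) n := by
  simp only [harmonicVandermonde, mul_assoc]
  rw [sum_range_choose_succ_mul]
  congr 1
  refine sum_congr rfl fun k hk => ?_
  have hk : k ≤ n := Nat.lt_succ_iff.mp (mem_range.mp hk)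
  rw [show q + (n + 1) = q + 1 + n by ring, show n + 1 - (k + 1) = n - k by omega,
    show q + (k + 1) = q + 1 + k by ring]

lemma harmonicVandermondeClosed_succ_succ (a q n : ℕ) :
    harmonicVandermondeClosed (a + 1) q (n + 1)
      = harmonicVandermondeClosed a q (n + 1) + harmonicVandermondeClosed a (q + 1) n := by
  set N := a + q + n + 1
  have hN : (N : ℚ) = a + q + n + 1 := by push_cast [N]; ring
  have hratio : (N.choose (n + 1) : ℚ) * (n + 1) = (N.choose n : ℚ) * (a + q + 1) := by
    rw [show (a + q + 1 : ℚ) = ((N - n : ℕ) : ℚ) by rw [Nat.cast_sub (by omega), hN]; ring]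
    exact_mod_cast Nat.choose_succ_right_eq N n
  have key : (N.choose (n + 1) : ℚ) / (a + q + 1)
      = ((N.choose n : ℚ) + N.choose (n + 1)) / (N + 1) := by
    rw [hN]
    field_simp
    linear_combination hratio
  simp only [harmonicVandermondeClosed]
  rw [show a + 1 + q + (n + 1) = N + 1 by ring, show a + q + (n + 1) = N by ring,
    show a + (q + 1) + n = N by ring, show a + 1 + q = a + q + 1 by ring,
    show q + (n + 1) = q + 1 + n by ring, show a + (q + 1) = a + q + 1 by ring,
    Nat.choose_succ_succ', H_succ N, H_succ (a + q)]
  push_cast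
  linear_combination key

theorem harmonicVandermonde_eq_closed (a q n : ℕ) :
    harmonicVandermonde a q n = harmonicVandermondeClosed a q n := by
  induction a generalizing q n with
  | zero => exact harmonicVandermonde_zero_left q n
  | succ a ih =>
    cases n with
    | zero => exact harmonicVandermonde_zero_right (a + 1) q
    | succ n =>
      rw [harmonicVandermonde_succ_succ, harmonicVandermondeClosed_succ_succ, ih, ih]

theorem stmt12 (p q n : ℕ) :
    ∑ k ∈ Finset.range (n + 1),
        ((p + n).choose k : ℚ) * ((q + n).choose (n - k) : ℚ) * H (q + k)
      = ((p + q + 2 * n).choose n : ℚ)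
          * (H (q + n) + H (p + q + n) - H (p + q + 2 * n)) := by
  have h := harmonicVandermonde_eq_closed (p + n) q n
  rwa [harmonicVandermondeClosed, show p + n + q + n = p + q + 2 * n by ring,
    show p + n + q = p + q + n by ring] at h
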